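/- arXiv:2510.16498 — 6 statements merged into one kernel-verified Lean document; each statement's English description precedes it below -/
import Mathlib

section
/- Let M, K be positive integers, let A₁ be an M×M unitary matrix over ℂ and A₂ a K×K unitary matrix over ℂ, and let f : Fin M × Fin K → Bool be a Boolean function. Let e₀ denote the standard basis vector supported at the pair of zero indices, let ψ = (A₁ ⊗ₖ A₂) · e₀ (the action of the Kronecker product on e₀), and let e₀' denote the standard basis vector of ℂ^K at index 0 with β = A₂ · e₀'. Define the initial success probability a = Σ_{p : f p = true} ‖ψ p‖². Then there exists k ∈ Fin M such that Σ_{q : f (k,q) = true} ‖β q‖² ≥ a. -/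
open Matrix Finset

/-- Theorem 3 (key lemma for distributed quantum amplitude amplification):
if the state-preparation unitary factors as `A₁ ⊗ₖ A₂` and `ψ = (A₁ ⊗ₖ A₂)|0,0⟩`,
then some sub-function `f_k` has conditional success probability at least the
total success probability `a`. -/
theorem distributed_qaa_exists_good_block
    (M K : ℕ) (hM : 0 < M) (hK : 0 < K)
    (A₁ : Matrix (Fin M) (Fin M) ℂ) (hA₁ : A₁ ∈ Matrix.unitaryGroup (Fin M) ℂ)
    (A₂ : Matrix (Fin K) (Fin K) ℂ) (hA₂ : A₂ ∈ Matrix.unitaryGroup (Fin K) ℂ)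
    (f : Fin M × Fin K → Bool)
    (e₀ : Fin M × Fin K → ℂ)
    (he₀ : e₀ = fun p => if p = (⟨0, hM⟩, ⟨0, hK⟩) then 1 else 0)
    (ψ : Fin M × Fin K → ℂ)
    (hψ : ψ = (Matrix.kroneckerMap (· * ·) A₁ A₂).mulVec e₀)
    (e₀' : Fin K → ℂ) (he₀' : e₀' = fun q => if q = ⟨0, hK⟩ then 1 else 0)
    (β : Fin K → ℂ) (hβ : β = A₂.mulVec e₀')
    (a : ℝ) (ha : a = ∑ p ∈ Finset.univ.filter (fun p => f p = true), ‖ψ p‖ ^ 2) :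
    ∃ k : Fin M,
      a ≤ ∑ q ∈ Finset.univ.filter (fun q => f (k, q) = true), ‖β q‖ ^ 2 := by
  -- entries
  have hβ' : ∀ q, β q = A₂ q ⟨0, hK⟩ := by
    intro q
    simp [hβ, he₀', mulVec, dotProduct]
  have hψ' : ∀ p : Fin M × Fin K, ψ p = A₁ p.1 ⟨0, hM⟩ * β p.2 := by
    intro p
    subst hψ he₀
    rw [hβ' p.2]
    simp only [mulVec, dotProduct]
    rw [Fintype.sum_prod_type]
    rw [Finset.sum_eq_single (⟨0, hM⟩ : Fin M)]
    · rw [Finset.sum_eq_single (⟨0, hK⟩ : Fin K)]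
      · simp [kroneckerMap]
      · intro b _ hb
        simp [Prod.ext_iff, hb]
      · simp
    · intro b _ hb
      apply Finset.sum_eq_zero
      intro c _
      simp [Prod.ext_iff, hb]
    · simp
  set w : Fin M → ℝ := fun k => ‖A₁ k ⟨0, hM⟩‖ ^ 2 with hw
  set b : Fin M → ℝ := fun k =>
    ∑ q ∈ Finset.univ.filter (fun q => f (k, q) = true), ‖β q‖ ^ 2 with hb
  have hwnn : ∀ k, 0 ≤ w k := fun k => by positivity
  -- sum of weights is 1
  have hwsum : ∑ k, w k = 1 := by
    have h := hA₁.1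
    have h00 := congrFun (congrFun h (⟨0, hM⟩ : Fin M)) (⟨0, hM⟩ : Fin M)
    simp only [Matrix.mul_apply, Matrix.one_apply_eq, star_apply,
      Matrix.conjTranspose_apply] at h00
    have : ((∑ k, w k : ℝ) : ℂ) = 1 := by
      rw [← h00]
      push_cast
      apply Finset.sum_congr rfl
      intro k _
      simp only [hw, Complex.star_def, Complex.sq_norm]
      rw [Complex.normSq_eq_conj_mul_self]
    exact_mod_cast this
  -- a = ∑ k, w k * b k
  have hab : a = ∑ k, w k * b k := by
    rw [ha]
    rw [Finset.sum_filter, Fintype.sum_prod_type]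
    apply Finset.sum_congr rfl
    intro k _
    rw [hb, Finset.mul_sum, Finset.sum_filter]
    apply Finset.sum_congr rfl
    intro q _
    rw [hψ' (k, q)]
    by_cases hfq : f (k, q) = true <;> simp [hfq, hw, norm_mul, mul_pow]
  -- conclude
  by_contra hcon
  push_neg at hcon
  have hex : ∃ k, 0 < w k := by
    by_contra hno
    push_neg at hno
    have : ∀ k, w k = 0 := fun k => le_antisymm (hno k) (hwnn k)
    simp [this] at hwsum
  obtain ⟨k₀, hk₀⟩ := hex
  have : ∑ k, w k * b k < ∑ k, w k * a := by
    apply Finset.sum_lt_sum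
    · intro i _
      exact mul_le_mul_of_nonneg_left (hcon i).le (hwnn i)
    · exact ⟨k₀, Finset.mem_univ _, by
        exact mul_lt_mul_of_pos_left (hcon k₀) hk₀⟩
  rw [← Finset.sum_mul, hwsum, one_mul, ← hab] at this
  exact lt_irrefl a this
end

section
/- Let a ∈ ℝ with 0 < a < 1, set θ = arcsin(√a) and m = ⌊π/(4θ)⌋ (the natural-number floor). Then sin((2m+1)·θ)² ≥ max a (1 - a). -/
open Real

/-- Trigonometric core of Theorem 1 (quantum amplitude amplification): with
`θ = arcsin √a` and `m = ⌊π/(4θ)⌋`, the amplified success probability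
`sin²((2m+1)θ)` is at least `max a (1 - a)`. -/
theorem qaa_success_prob_ge_max
    (a : ℝ) (ha0 : 0 < a) (ha1 : a < 1)
    (θ : ℝ) (hθ : θ = Real.arcsin (Real.sqrt a))
    (m : ℕ) (hm : m = ⌊π / (4 * θ)⌋₊) :
    max a (1 - a) ≤ Real.sin ((2 * m + 1) * θ) ^ 2 := by
  have hpi := Real.pi_pos
  have hsq0 : 0 < Real.sqrt a := Real.sqrt_pos.mpr ha0
  have hsq1 : Real.sqrt a < 1 := by
    nlinarith [Real.sq_sqrt ha0.le, Real.sqrt_nonneg a]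
  have hθ0 : 0 < θ := by rw [hθ]; exact Real.arcsin_pos.mpr hsq0
  have hθlt : θ < π / 2 := by
    rw [hθ]; exact Real.arcsin_lt_pi_div_two.mpr hsq1
  have hsin : Real.sin θ = Real.sqrt a := by
    rw [hθ]; exact Real.sin_arcsin (by linarith) hsq1.le
  have hsinsq : Real.sin θ ^ 2 = a := by
    rw [hsin]; exact Real.sq_sqrt ha0.le
  rcases le_or_gt a (1/2) with hcase | hcase
  · -- a ≤ 1/2
    have hmax : max a (1 - a) = 1 - a := max_eq_right (by linarith)
    rw [hmax]
    have hfl : (m : ℝ) ≤ π / (4 * θ) := by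
      rw [hm]; exact Nat.floor_le (by positivity)
    have hfu : π / (4 * θ) < (m : ℝ) + 1 := by
      rw [hm]; exact Nat.lt_floor_add_one _
    have h4θ : 0 < 4 * θ := by linarith
    have hfl' : (m : ℝ) * (4 * θ) ≤ π := by
      rw [div_eq_mul_inv] at hfl
      calc (m:ℝ) * (4*θ) ≤ (π * (4*θ)⁻¹) * (4*θ) := by nlinarith
        _ = π := by field_simp
    have hfu' : π < ((m : ℝ) + 1) * (4 * θ) := by
      rw [div_lt_iff₀ h4θ] at hfu; linarith
    set x : ℝ := (2 * (m : ℝ) + 1) * θ with hx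
    have h1 : x ≤ π / 2 + θ := by rw [hx]; nlinarith
    have h2 : π / 2 - θ ≤ x := by rw [hx]; nlinarith
    have hcos : Real.cos θ ≤ Real.sin x := by
      have habs : |π / 2 - x| ≤ θ := abs_le.mpr ⟨by linarith, by linarith⟩
      calc Real.cos θ ≤ Real.cos |π / 2 - x| :=
            Real.cos_le_cos_of_nonneg_of_le_pi (abs_nonneg _) (by linarith) habs
        _ = Real.sin x := by rw [Real.cos_abs, Real.cos_pi_div_two_sub]
    have hcos0 : 0 ≤ Real.cos θ :=
      Real.cos_nonneg_of_mem_Icc ⟨by linarith, hθlt.le⟩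
    have hsq : Real.cos θ ^ 2 ≤ Real.sin x ^ 2 := by nlinarith
    have := Real.cos_sq' θ
    linarith
  · -- a > 1/2
    have hθgt : π / 4 < θ := by
      rw [hθ]
      have hmem1 : π / 4 ∈ Set.Icc (-(π/2)) (π/2) := by
        constructor <;> linarith
      have hmem2 : Real.sqrt a ∈ Set.Icc (-1 : ℝ) 1 := by
        constructor <;> linarith
      rw [Real.lt_arcsin_iff_sin_lt hmem1 hmem2, Real.sin_pi_div_four]
      nlinarith [Real.sq_sqrt ha0.le, Real.sq_sqrt (by norm_num : (0:ℝ) ≤ 2),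
        Real.sqrt_nonneg a, Real.sqrt_nonneg 2]
    have hm0 : m = 0 := by
      rw [hm]; apply Nat.floor_eq_zero.mpr
      rw [div_lt_one (by linarith)]; linarith
    subst hm0
    have hmax : max a (1 - a) = a := max_eq_left (by linarith)
    rw [hmax]
    simp only [Nat.cast_zero, mul_zero, zero_add, one_mul]
    linarith [hsinsq]
end

section
/- Let N be a positive integer, f : Fin N → Bool, and let A be an N×N unitary matrix over ℂ. Let e₀ be the standard basis vector of ℂ^N at index 0 and ψ = A · e₀. Define a = Σ_{x : f x = true} ‖ψ x‖² and assume 0 < a < 1. Let S_f = diagonal(x ↦ if f x then −1 else 1), S₀ = diagonal(x ↦ if x = 0 then −1 else 1), and Q = −(A * S₀ * Aᴴ * S_f). Set θ = arcsin(√a) and m = ⌊π/(4θ)⌋. Then Σ_{x : f x = true} ‖(Q^m · ψ) x‖² ≥ max a (1 − a). -/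
open Matrix Finset Real

/-- Theorem 1 (quantum amplitude amplification, Brassard et al.) in matrix form:
after `m = ⌊π/(4 arcsin √a)⌋` iterations of `Q = -A S₀ Aᴴ S_f` applied to
`ψ = A|0⟩`, a measurement yields a target `x` with probability at least
`max a (1 - a)`. -/
theorem quantum_amplitude_amplification
    (N : ℕ) (hN : 0 < N) (f : Fin N → Bool)
    (A : Matrix (Fin N) (Fin N) ℂ) (hA : A ∈ Matrix.unitaryGroup (Fin N) ℂ)
    (e₀ : Fin N → ℂ) (he₀ : e₀ = fun x => if x = ⟨0, hN⟩ then 1 else 0)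
    (ψ : Fin N → ℂ) (hψ : ψ = A.mulVec e₀)
    (a : ℝ) (ha : a = ∑ x ∈ Finset.univ.filter (fun x => f x = true), ‖ψ x‖ ^ 2)
    (ha0 : 0 < a) (ha1 : a < 1)
    (Sf S₀ Q : Matrix (Fin N) (Fin N) ℂ)
    (hSf : Sf = Matrix.diagonal (fun x => if f x then (-1 : ℂ) else 1))
    (hS₀ : S₀ = Matrix.diagonal (fun x => if x = ⟨0, hN⟩ then (-1 : ℂ) else 1))
    (hQ : Q = -(A * S₀ * Aᴴ * Sf))
    (θ : ℝ) (hθ : θ = Real.arcsin (Real.sqrt a))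
    (m : ℕ) (hm : m = ⌊π / (4 * θ)⌋₊) :
    max a (1 - a) ≤
      ∑ x ∈ Finset.univ.filter (fun x => f x = true), ‖((Q ^ m).mulVec ψ) x‖ ^ 2 := by
  -- basic unitary facts
  have hA1 : A * Aᴴ = 1 := by
    simpa [Matrix.star_eq_conjTranspose] using (Matrix.mem_unitaryGroup_iff.mp hA)
  have hA2 : Aᴴ * A = 1 := by
    simpa [Matrix.star_eq_conjTranspose] using (Matrix.mem_unitaryGroup_iff'.mp hA)
  -- trig setup
  have hsqa0 : (0:ℝ) < Real.sqrt a := Real.sqrt_pos.mpr ha0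
  have hsqa1 : Real.sqrt a < 1 := by
    rw [show (1:ℝ) = Real.sqrt 1 by simp]
    exact Real.sqrt_lt_sqrt (le_of_lt ha0) ha1
  have hθ0 : 0 < θ := by rw [hθ]; exact Real.arcsin_pos.mpr hsqa0
  have hθ2 : θ < π / 2 := by rw [hθ]; exact Real.arcsin_lt_pi_div_two.mpr hsqa1
  have hsinθ : Real.sin θ = Real.sqrt a := by
    rw [hθ]; exact Real.sin_arcsin (by linarith [Real.sqrt_nonneg a]) hsqa1.le
  have hsin2 : Real.sin θ ^ 2 = a := by
    rw [hsinθ, Real.sq_sqrt ha0.le]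
  have hcos0 : 0 < Real.cos θ := Real.cos_pos_of_mem_Ioo ⟨by linarith [Real.pi_pos], hθ2⟩
  have hcos2 : Real.cos θ ^ 2 = 1 - a := by
    have := Real.sin_sq_add_cos_sq θ; linarith [hsin2]
  have hsinne : Real.sin θ ≠ 0 := by rw [hsinθ]; exact ne_of_gt hsqa0
  have hcosne : Real.cos θ ≠ 0 := ne_of_gt hcos0
  -- good/bad decomposition
  set g : Fin N → ℂ := fun x => if f x then ψ x else 0 with hg
  set b : Fin N → ℂ := fun x => if f x then 0 else ψ x with hb
  have hgb : ψ = g + b := by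
    funext x; by_cases h : f x <;> simp [hg, hb, h]
  -- Sf action
  have hSfg : Sf.mulVec g = -g := by
    funext x
    rw [hSf, Matrix.mulVec_diagonal]
    by_cases h : f x <;> simp [hg, h]
  have hSfb : Sf.mulVec b = b := by
    funext x
    rw [hSf, Matrix.mulVec_diagonal]
    by_cases h : f x <;> simp [hb, h]
  -- pointwise formula for ψ
  have hψj : ∀ j, ψ j = A j ⟨0, hN⟩ := by
    intro j
    simp [hψ, he₀, Matrix.mulVec, dotProduct, mul_ite, mul_one, mul_zero,
      Finset.sum_ite_eq']
  -- key formula for Q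
  have hkey : ∀ v : Fin N → ℂ, Q.mulVec v
      = -(Sf.mulVec v) + (2 * (star ψ ⬝ᵥ Sf.mulVec v)) • ψ := by
    intro v
    set w := Sf.mulVec v with hw
    set u := Aᴴ.mulVec w with hu
    have hS₀u : S₀.mulVec u = u - (2 * u ⟨0, hN⟩) • e₀ := by
      funext x
      rw [hS₀, Matrix.mulVec_diagonal]
      by_cases h : x = ⟨0, hN⟩
      · subst h; simp [he₀]; ring
      · simp [he₀, h]
    have hAu : A.mulVec u = w := by
      rw [hu, Matrix.mulVec_mulVec, hA1, Matrix.one_mulVec]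
    have hu0 : u ⟨0, hN⟩ = star ψ ⬝ᵥ w := by
      simp [hu, Matrix.mulVec, dotProduct, Matrix.conjTranspose_apply, hψj]
    have expand : Q.mulVec v = -(A.mulVec (S₀.mulVec u)) := by
      rw [hQ, Matrix.neg_mulVec, hu, hw, Matrix.mulVec_mulVec, Matrix.mulVec_mulVec,
        Matrix.mulVec_mulVec]
    rw [expand, hS₀u, Matrix.mulVec_sub, Matrix.mulVec_smul, hAu, ← hψ, hu0]
    module
  -- inner products
  have hdotg : star ψ ⬝ᵥ g = (a : ℂ) := by
    rw [ha]
    push_cast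
    rw [dotProduct, Finset.sum_filter]
    refine Finset.sum_congr rfl fun x _ => ?_
    by_cases h : f x
    · simp only [hg, h, if_true, Pi.star_apply, RCLike.star_def]
      rw [mul_comm, Complex.mul_conj']
    · simp [hg, h]
  have hdotψ : star ψ ⬝ᵥ ψ = 1 := by
    rw [hψ, Matrix.star_mulVec, Matrix.dotProduct_mulVec, Matrix.vecMul_vecMul,
      hA2, Matrix.vecMul_one]
    simp [he₀, dotProduct]
  have hdotb : star ψ ⬝ᵥ b = ((1 - a : ℝ) : ℂ) := by
    have h1 : star ψ ⬝ᵥ ψ = star ψ ⬝ᵥ g + star ψ ⬝ᵥ b := by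
      rw [hgb]; exact dotProduct_add _ _ _
    rw [hdotψ, hdotg] at h1
    push_cast
    linear_combination -h1
  -- action of Q on g and b
  have hQg : Q.mulVec g = ((1 - 2*a : ℝ) : ℂ) • g + ((-(2*a) : ℝ) : ℂ) • b := by
    rw [hkey g, hSfg, dotProduct_neg, hdotg, hgb]
    match_scalars <;> ring
  have hQb : Q.mulVec b = ((2*(1-a) : ℝ) : ℂ) • g + ((1 - 2*a : ℝ) : ℂ) • b := by
    rw [hkey b, hSfb, hdotb, hgb]
    match_scalars <;> ring
  -- trig recurrences
  have hc2 : Real.cos (2*θ) = 1 - 2*a := by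
    rw [Real.cos_two_mul]; linarith [hcos2]
  have hs2 : Real.sin (2*θ) = 2 * Real.sin θ * Real.cos θ := Real.sin_two_mul θ
  have hrecC : ∀ n : ℕ, Real.sin ((2*(n+1:ℕ)+1)*θ) / Real.sin θ
      = (1-2*a) * (Real.sin ((2*(n:ℕ)+1)*θ)/Real.sin θ)
        + (2*(1-a)) * (Real.cos ((2*(n:ℕ)+1)*θ)/Real.cos θ) := by
    intro n
    have h : ((2*(n+1:ℕ)+1) : ℝ)*θ = ((2*(n:ℕ)+1) : ℝ)*θ + 2*θ := by push_cast; ring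
    rw [h, Real.sin_add, hc2, hs2]
    field_simp
    linear_combination (2 * Real.cos (((2*(n:ℕ)+1) : ℝ)*θ) * Real.sin θ) * hcos2
  have hrecD : ∀ n : ℕ, Real.cos ((2*(n+1:ℕ)+1)*θ) / Real.cos θ
      = (-(2*a)) * (Real.sin ((2*(n:ℕ)+1)*θ)/Real.sin θ)
        + (1-2*a) * (Real.cos ((2*(n:ℕ)+1)*θ)/Real.cos θ) := by
    intro n
    have h : ((2*(n+1:ℕ)+1) : ℝ)*θ = ((2*(n:ℕ)+1) : ℝ)*θ + 2*θ := by push_cast; ring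
    rw [h, Real.cos_add, hc2, hs2]
    field_simp
    linear_combination (-(2 * Real.sin (((2*(n:ℕ)+1) : ℝ)*θ) * Real.cos θ)) * hsin2
  -- the iterate formula
  have hiter : ∀ k : ℕ, (Q ^ k).mulVec ψ =
      ((Real.sin ((2*(k:ℕ)+1)*θ) / Real.sin θ : ℝ) : ℂ) • g +
      ((Real.cos ((2*(k:ℕ)+1)*θ) / Real.cos θ : ℝ) : ℂ) • b := by
    intro k
    induction k with
    | zero =>
      simp only [pow_zero, Matrix.one_mulVec, Nat.cast_zero]
      rw [show (2*(0:ℝ)+1)*θ = θ by ring, div_self hsinne, div_self hcosne, hgb]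
      push_cast
      module
    | succ n ih =>
      rw [pow_succ', ← Matrix.mulVec_mulVec, ih, Matrix.mulVec_add, Matrix.mulVec_smul,
        Matrix.mulVec_smul, hQg, hQb, hrecC n, hrecD n]
      module
  -- evaluate the target probability
  have hpt : ∀ x ∈ Finset.univ.filter (fun x => f x = true),
      ‖(((Real.sin ((2*(m:ℕ)+1)*θ) / Real.sin θ : ℝ) : ℂ) • g
        + ((Real.cos ((2*(m:ℕ)+1)*θ) / Real.cos θ : ℝ) : ℂ) • b) x‖ ^ 2
      = (Real.sin ((2*(m:ℕ)+1)*θ) / Real.sin θ)^2 * ‖ψ x‖ ^ 2 := by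
    intro x hx
    have hfx : f x = true := by simpa using (Finset.mem_filter.mp hx).2
    have hgx : g x = ψ x := by simp [hg, hfx]
    have hbx : b x = 0 := by simp [hb, hfx]
    simp only [Pi.add_apply, Pi.smul_apply, hgx, hbx, smul_zero, add_zero, smul_eq_mul,
      mul_zero, norm_mul, mul_pow, Complex.norm_real, Real.norm_eq_abs, sq_abs]
  have hsum : ∑ x ∈ Finset.univ.filter (fun x => f x = true), ‖((Q ^ m).mulVec ψ) x‖ ^ 2
      = Real.sin ((2*(m:ℕ)+1)*θ) ^ 2 := by
    rw [hiter m, Finset.sum_congr rfl hpt, ← Finset.mul_sum, ← ha, div_pow, hsin2,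
      div_mul_cancel₀ _ (ne_of_gt ha0)]
  rw [hsum]
  -- bounds coming from the choice of m
  have h4θ : (0:ℝ) < 4 * θ := by linarith
  have hmle : (m:ℝ) * (4 * θ) ≤ π := by
    have h := Nat.floor_le (a := π / (4*θ)) (by positivity)
    rw [← hm] at h
    calc (m:ℝ) * (4*θ) ≤ (π / (4*θ)) * (4*θ) := mul_le_mul_of_nonneg_right h h4θ.le
      _ = π := by field_simp
  have hmgt : π < ((m:ℝ) + 1) * (4 * θ) := by
    have h := Nat.lt_floor_add_one (π / (4*θ))
    rw [← hm] at h
    calc π = (π / (4*θ)) * (4*θ) := by field_simp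
      _ < ((m:ℝ) + 1) * (4*θ) := mul_lt_mul_of_pos_right (by exact_mod_cast h) h4θ
  rcases le_or_gt a (1/2) with hhalf | hhalf
  · -- a ≤ 1/2 : the max is 1 - a = cos² θ
    rw [max_eq_right (by linarith)]
    have habs : |π/2 - (2*(m:ℝ)+1)*θ| ≤ θ := abs_le.mpr ⟨by linarith, by linarith⟩
    have hmono : Real.cos θ ≤ Real.cos |π/2 - (2*(m:ℝ)+1)*θ| :=
      Real.cos_le_cos_of_nonneg_of_le_pi (abs_nonneg _) (by linarith [Real.pi_pos]) habs
    rw [Real.cos_abs, Real.cos_pi_div_two_sub] at hmono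
    have hsq : Real.cos θ ^ 2 ≤ Real.sin ((2*(m:ℝ)+1)*θ) ^ 2 :=
      pow_le_pow_left₀ hcos0.le hmono 2
    linarith [hcos2, hsq]
  · -- a > 1/2 : then θ > π/4, m = 0, and the probability is exactly a
    have hθ4 : π/4 < θ := by
      by_contra hcon
      push_neg at hcon
      have hs : Real.sin θ ≤ Real.sin (π/4) :=
        Real.sin_le_sin_of_le_of_le_pi_div_two (by linarith) (by linarith [Real.pi_pos]) hcon
      rw [Real.sin_pi_div_four] at hs
      have hspos : 0 < Real.sin θ := by rw [hsinθ]; exact hsqa0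
      have hsq : Real.sin θ ^ 2 ≤ (Real.sqrt 2 / 2) ^ 2 := pow_le_pow_left₀ hspos.le hs 2
      rw [div_pow, Real.sq_sqrt (by norm_num : (0:ℝ) ≤ 2)] at hsq
      rw [hsin2] at hsq
      linarith
    have hm0 : m = 0 := by
      rw [hm, Nat.floor_eq_zero, div_lt_one h4θ]
      linarith
    subst hm0
    rw [max_eq_left (by linarith)]
    rw [show (2*((0:ℕ):ℝ)+1)*θ = θ by push_cast; ring, hsin2]
end

section
/- Let N be a positive integer, f : Fin N → Bool, and let A be an N×N unitary matrix over ℂ. Let e₀ be the standard basis vector of ℂ^N at index 0 and ψ = A · e₀. Define a = Σ_{x : f x = true} ‖ψ x‖² and assume 0 < a < 1. Let S_f = diagonal(x ↦ if f x then −1 else 1), S₀ = diagonal(x ↦ if x = 0 then −1 else 1), and Q = −(A * S₀ * Aᴴ * S_f). Set θ = arcsin(√a). Then for every natural number m, Σ_{x : f x = true} ‖(Q^m · ψ) x‖² = sin((2m+1)·θ)². -/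
open Matrix Finset Real

/-- Exact success-probability formula underlying Theorem 1: after `m` iterations
of `Q = -A S₀ Aᴴ S_f` applied to `ψ = A|0⟩`, the probability of measuring a
target `x` equals `sin²((2m+1)θ)` where `θ = arcsin √a`. -/
theorem qaa_success_prob_formula
    (N : ℕ) (hN : 0 < N) (f : Fin N → Bool)
    (A : Matrix (Fin N) (Fin N) ℂ) (hA : A ∈ Matrix.unitaryGroup (Fin N) ℂ)
    (e₀ : Fin N → ℂ) (he₀ : e₀ = fun x => if x = ⟨0, hN⟩ then 1 else 0)
    (ψ : Fin N → ℂ) (hψ : ψ = A.mulVec e₀)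
    (a : ℝ) (ha : a = ∑ x ∈ Finset.univ.filter (fun x => f x = true), ‖ψ x‖ ^ 2)
    (ha0 : 0 < a) (ha1 : a < 1)
    (Sf S₀ Q : Matrix (Fin N) (Fin N) ℂ)
    (hSf : Sf = Matrix.diagonal (fun x => if f x then (-1 : ℂ) else 1))
    (hS₀ : S₀ = Matrix.diagonal (fun x => if x = ⟨0, hN⟩ then (-1 : ℂ) else 1))
    (hQ : Q = -(A * S₀ * Aᴴ * Sf))
    (θ : ℝ) (hθ : θ = Real.arcsin (Real.sqrt a)) :
    ∀ m : ℕ,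
      ∑ x ∈ Finset.univ.filter (fun x => f x = true), ‖((Q ^ m).mulVec ψ) x‖ ^ 2 =
        Real.sin ((2 * m + 1) * θ) ^ 2 := by
  -- notation
  set z : Fin N := ⟨0, hN⟩ with hz
  -- good and bad parts
  set g : Fin N → ℂ := fun x => if f x then ψ x else 0 with hg
  set b : Fin N → ℂ := fun x => if f x then 0 else ψ x with hb
  have hgb : ψ = g + b := by
    funext x; by_cases h : f x <;> simp [hg, hb, h]
  -- ψ is the 0-th column of A
  have hψx : ∀ x, ψ x = A x z := by
    intro x
    simp [hψ, he₀, Matrix.mulVec, dotProduct, mul_ite]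
  -- unitarity
  have hAAH : A * Aᴴ = 1 := (Matrix.mem_unitaryGroup_iff.mp hA)
  have hAHA : Aᴴ * A = 1 := (Matrix.mem_unitaryGroup_iff'.mp hA)
  -- Sf action
  have hSfg : Sf.mulVec g = -g := by
    funext x
    rw [hSf, mulVec_diagonal]
    by_cases h : f x <;> simp [hg, h]
  have hSfb : Sf.mulVec b = b := by
    funext x
    rw [hSf, mulVec_diagonal]
    by_cases h : f x <;> simp [hb, h]
  -- inner products
  have hconj : ∀ w : ℂ, (starRingEnd ℂ) w * w = (‖w‖^2 : ℝ) := by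
    intro w
    rw [mul_comm, Complex.mul_conj']
    push_cast
    ring
  have hinner_g : ∑ j, (starRingEnd ℂ) (ψ j) * g j = (a : ℂ) := by
    rw [ha]
    push_cast
    rw [Finset.sum_filter]
    apply Finset.sum_congr rfl
    intro x _
    by_cases h : f x <;> simp [hg, h, hconj]
  have hinner_ψ : ∑ j, (starRingEnd ℂ) (ψ j) * ψ j = 1 := by
    have h1 : (Aᴴ * A) z z = 1 := by rw [hAHA]; simp
    rw [Matrix.mul_apply] at h1
    rw [← h1]
    apply Finset.sum_congr rfl
    intro j _
    rw [Matrix.conjTranspose_apply, hψx j]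
    rfl
  have hinner_b : ∑ j, (starRingEnd ℂ) (ψ j) * b j = ((1 - a : ℝ) : ℂ) := by
    have : ∑ j, (starRingEnd ℂ) (ψ j) * g j + ∑ j, (starRingEnd ℂ) (ψ j) * b j
        = ∑ j, (starRingEnd ℂ) (ψ j) * ψ j := by
      rw [← Finset.sum_add_distrib]
      apply Finset.sum_congr rfl
      intro j _
      rw [← mul_add]
      congr 1
      by_cases h : f j <;> simp [hg, hb, h]
    rw [hinner_ψ, hinner_g] at this
    push_cast
    linear_combination this
  -- the key formula for Q.mulVec
  have hQv : ∀ v : Fin N → ℂ,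
      Q.mulVec v = -(Sf.mulVec v) + (2 * ∑ j, (starRingEnd ℂ) (ψ j) * (Sf.mulVec v) j) • ψ := by
    intro v
    set w := Sf.mulVec v with hw
    set u := Aᴴ.mulVec w with hu
    have hu0 : u z = ∑ j, (starRingEnd ℂ) (ψ j) * w j := by
      rw [hu]
      simp only [Matrix.mulVec, dotProduct, Matrix.conjTranspose_apply]
      apply Finset.sum_congr rfl
      intro j _
      rw [hψx j]
      rfl
    have hS0u : S₀.mulVec u = u - (2 * u z) • e₀ := by
      funext x
      rw [hS₀, mulVec_diagonal, he₀]
      by_cases h : x = z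
      · subst h; simp; ring
      · simp [h]
    have hQv1 : Q.mulVec v = -(A.mulVec (S₀.mulVec u)) := by
      rw [hQ]
      simp only [Matrix.neg_mulVec, hu, hw, ← Matrix.mulVec_mulVec]
    rw [hQv1, hS0u]
    have hAu : A.mulVec u = w := by
      rw [hu, Matrix.mulVec_mulVec, hAAH, Matrix.one_mulVec]
    rw [Matrix.mulVec_sub, Matrix.mulVec_smul, hAu, ← hψ, hu0]
    module
  -- Q action on g and b
  have hQg : Q.mulVec g = ((1 - 2*a : ℝ) : ℂ) • g + ((-(2*a) : ℝ) : ℂ) • b := by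
    rw [hQv g, hSfg]
    simp only [Pi.neg_apply, mul_neg, Finset.sum_neg_distrib, hinner_g]
    rw [hgb]
    push_cast
    module
  have hQb : Q.mulVec b = ((2*(1-a) : ℝ) : ℂ) • g + ((1 - 2*a : ℝ) : ℂ) • b := by
    rw [hQv b, hSfb, hinner_b]
    rw [hgb]
    push_cast
    module
  -- trig setup
  have hs : Real.sin θ = Real.sqrt a := by
    rw [hθ, Real.sin_arcsin]
    · linarith [Real.sqrt_nonneg a]
    · exact Real.sqrt_le_one.mpr (le_of_lt ha1)
  have hc : Real.cos θ = Real.sqrt (1 - a) := by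
    rw [hθ, Real.cos_arcsin, Real.sq_sqrt (le_of_lt ha0)]
  have hs2 : Real.sin θ ^ 2 = a := by
    rw [hs, Real.sq_sqrt (le_of_lt ha0)]
  have hc2 : Real.cos θ ^ 2 = 1 - a := by
    rw [hc, Real.sq_sqrt (by linarith)]
  have hspos : 0 < Real.sin θ := by
    rw [hs]; exact Real.sqrt_pos.mpr ha0
  have hcpos : 0 < Real.cos θ := by
    rw [hc]; exact Real.sqrt_pos.mpr (by linarith)
  -- main induction
  have key : ∀ m : ℕ, (Q ^ m).mulVec ψ =
      ((Real.sin ((2*m+1)*θ) / Real.sin θ : ℝ) : ℂ) • g +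
      ((Real.cos ((2*m+1)*θ) / Real.cos θ : ℝ) : ℂ) • b := by
    intro m
    induction m with
    | zero =>
      simp only [pow_zero, Matrix.one_mulVec, Nat.cast_zero, mul_zero, zero_add, one_mul]
      rw [div_self (ne_of_gt hspos), div_self (ne_of_gt hcpos), hgb]
      push_cast
      module
    | succ n ih =>
      have hpow : (Q ^ (n+1)).mulVec ψ = Q.mulVec ((Q ^ n).mulVec ψ) := by
        rw [pow_succ', ← Matrix.mulVec_mulVec]
      rw [hpow, ih, Matrix.mulVec_add, Matrix.mulVec_smul, Matrix.mulVec_smul, hQg, hQb]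
      have hsin : Real.sin ((2*(n+1:ℕ)+1)*θ) / Real.sin θ
          = (1-2*a) * (Real.sin ((2*n+1)*θ) / Real.sin θ)
            + (2*(1-a)) * (Real.cos ((2*n+1)*θ) / Real.cos θ) := by
        have harg : ((2*((n:ℝ)+1)+1)*θ) = (2*n+1)*θ + 2*θ := by ring
        rw [show (1:ℝ)-2*a = Real.cos θ^2 - Real.sin θ^2 by rw [hs2, hc2]; ring,
            show 2*((1:ℝ)-a) = 2*Real.cos θ^2 by rw [hc2]]
        push_cast
        rw [harg, Real.sin_add, Real.sin_two_mul, Real.cos_two_mul']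
        field_simp
      have hcos : Real.cos ((2*(n+1:ℕ)+1)*θ) / Real.cos θ
          = (-(2*a)) * (Real.sin ((2*n+1)*θ) / Real.sin θ)
            + (1-2*a) * (Real.cos ((2*n+1)*θ) / Real.cos θ) := by
        have harg : ((2*((n:ℝ)+1)+1)*θ) = (2*n+1)*θ + 2*θ := by ring
        rw [show (1:ℝ)-2*a = Real.cos θ^2 - Real.sin θ^2 by rw [hs2, hc2]; ring,
            show -(2*a) = -(2*Real.sin θ^2) by rw [hs2]]
        push_cast
        rw [harg, Real.cos_add, Real.sin_two_mul, Real.cos_two_mul']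
        field_simp
        ring
      rw [hsin, hcos]
      push_cast
      module
  -- finish
  intro m
  rw [key m]
  have hpt : ∀ x ∈ Finset.univ.filter (fun x => f x = true),
      ‖(((Real.sin ((2*m+1)*θ) / Real.sin θ : ℝ) : ℂ) • g +
        ((Real.cos ((2*m+1)*θ) / Real.cos θ : ℝ) : ℂ) • b) x‖ ^ 2
      = (Real.sin ((2*m+1)*θ) / Real.sin θ)^2 * ‖ψ x‖^2 := by
    intro x hx
    simp only [Finset.mem_filter] at hx
    have hfx := hx.2
    simp only [Pi.add_apply, Pi.smul_apply, hg, hb, hfx, if_pos, if_neg]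
    rw [smul_zero, add_zero, smul_eq_mul, norm_mul, mul_pow]
    congr 1
    rw [Complex.norm_real, Real.norm_eq_abs, sq_abs]
  rw [Finset.sum_congr rfl hpt, ← Finset.mul_sum, ← ha, div_pow, hs2]
  field_simp
end

section
/- Let N be a positive integer, f : Fin N → Bool, and let A be an N×N unitary matrix over ℂ. Let e₀ be the standard basis vector of ℂ^N at index 0 and ψ = A · e₀. Define a = Σ_{x : f x = true} ‖ψ x‖², and define the vectors Ψ₁ = (x ↦ if f x then ψ x else 0) and Ψ₀ = (x ↦ if f x then 0 else ψ x). Let S_f = diagonal(x ↦ if f x then −1 else 1), S₀ = diagonal(x ↦ if x = 0 then −1 else 1), and Q = −(A * S₀ * Aᴴ * S_f). Then Q · Ψ₁ = (1 − 2a) • Ψ₁ − (2a) • Ψ₀ and Q · Ψ₀ = (2(1 − a)) • Ψ₁ + (1 − 2a) • Ψ₀ (scalars coerced from ℝ to ℂ). -/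
open Matrix Finset

/-- Two-dimensional invariant-subspace action of the amplitude amplification
iterate `Q = -A S₀ Aᴴ S_f` on the target component `Ψ₁` and the non-target
component `Ψ₀` of `ψ = A|0⟩`, where `a` is the initial success probability. -/
theorem qaa_iterate_two_dim_action
    (N : ℕ) (hN : 0 < N) (f : Fin N → Bool)
    (A : Matrix (Fin N) (Fin N) ℂ) (hA : A ∈ Matrix.unitaryGroup (Fin N) ℂ)
    (e₀ : Fin N → ℂ) (he₀ : e₀ = fun x => if x = ⟨0, hN⟩ then 1 else 0)
    (ψ : Fin N → ℂ) (hψ : ψ = A.mulVec e₀)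
    (a : ℝ) (ha : a = ∑ x ∈ Finset.univ.filter (fun x => f x = true), ‖ψ x‖ ^ 2)
    (Ψ₁ Ψ₀ : Fin N → ℂ)
    (hΨ₁ : Ψ₁ = fun x => if f x then ψ x else 0)
    (hΨ₀ : Ψ₀ = fun x => if f x then 0 else ψ x)
    (Sf S₀ Q : Matrix (Fin N) (Fin N) ℂ)
    (hSf : Sf = Matrix.diagonal (fun x => if f x then (-1 : ℂ) else 1))
    (hS₀ : S₀ = Matrix.diagonal (fun x => if x = ⟨0, hN⟩ then (-1 : ℂ) else 1))
    (hQ : Q = -(A * S₀ * Aᴴ * Sf)) :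
    Q.mulVec Ψ₁ = ((1 - 2 * a : ℝ) : ℂ) • Ψ₁ - ((2 * a : ℝ) : ℂ) • Ψ₀ ∧
      Q.mulVec Ψ₀ = ((2 * (1 - a) : ℝ) : ℂ) • Ψ₁ + ((1 - 2 * a : ℝ) : ℂ) • Ψ₀ := by
  have hψcol : ∀ x, ψ x = A x ⟨0, hN⟩ := by
    intro x
    simp [hψ, he₀, Matrix.mulVec, dotProduct]
  have hAA : A * Aᴴ = 1 := Matrix.mem_unitaryGroup_iff.mp hA
  have hAA' : Aᴴ * A = 1 := Matrix.mem_unitaryGroup_iff'.mp hA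
  -- ψ is a unit vector
  have hnorm : ∑ x, (starRingEnd ℂ) (ψ x) * ψ x = 1 := by
    have h := congrArg (fun M => M ⟨0, hN⟩ ⟨0, hN⟩) hAA'
    simp only [Matrix.mul_apply, Matrix.conjTranspose_apply, Matrix.one_apply_eq] at h
    calc ∑ x, (starRingEnd ℂ) (ψ x) * ψ x
        = ∑ x, star (A x ⟨0, hN⟩) * A x ⟨0, hN⟩ := by
          refine Finset.sum_congr rfl fun x _ => by rw [hψcol x]; rfl
      _ = 1 := h
  -- the reflection formula
  have key : ∀ w : Fin N → ℂ, (A * S₀ * Aᴴ).mulVec w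
      = w - (2 * ∑ x, (starRingEnd ℂ) (ψ x) * w x) • ψ := by
    intro w
    have h1 : (A * S₀ * Aᴴ).mulVec w = A.mulVec (S₀.mulVec (Aᴴ.mulVec w)) := by
      rw [Matrix.mulVec_mulVec, Matrix.mulVec_mulVec]
    have hc : (Aᴴ.mulVec w) ⟨0, hN⟩ = ∑ x, (starRingEnd ℂ) (ψ x) * w x := by
      simp only [Matrix.mulVec, dotProduct, Matrix.conjTranspose_apply]
      refine Finset.sum_congr rfl fun x _ => by rw [hψcol x]; rfl
    have h2 : S₀.mulVec (Aᴴ.mulVec w)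
        = Aᴴ.mulVec w - (2 * ∑ x, (starRingEnd ℂ) (ψ x) * w x) • e₀ := by
      funext x
      by_cases hx : x = ⟨0, hN⟩
      · subst hx
        simp only [hS₀, Matrix.mulVec_diagonal, Pi.sub_apply,
          Pi.smul_apply, he₀, eq_self_iff_true, if_true, smul_eq_mul, mul_one]
        rw [hc]; ring
      · simp [hS₀, Matrix.mulVec_diagonal, hx, he₀]
    rw [h1, h2, Matrix.mulVec_sub, Matrix.mulVec_smul, ← hψ,
      Matrix.mulVec_mulVec, hAA, Matrix.one_mulVec]
  -- Sf acts as -1 on Ψ₁ and +1 on Ψ₀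
  have hSf1 : Sf.mulVec Ψ₁ = -Ψ₁ := by
    funext x
    cases hfx : f x <;> simp [hSf, Matrix.mulVec_diagonal, hΨ₁, hfx]
  have hSf0 : Sf.mulVec Ψ₀ = Ψ₀ := by
    funext x
    cases hfx : f x <;> simp [hSf, Matrix.mulVec_diagonal, hΨ₀, hfx]
  -- ψ decomposes
  have hsumψ : ∀ x, ψ x = Ψ₁ x + Ψ₀ x := by
    intro x
    cases hfx : f x <;> simp [hΨ₁, hΨ₀, hfx]
  -- inner products
  have hc1 : ∑ x, (starRingEnd ℂ) (ψ x) * Ψ₁ x = (a : ℂ) := by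
    rw [ha]
    push_cast
    rw [Finset.sum_filter]
    refine Finset.sum_congr rfl fun x _ => ?_
    cases hfx : f x <;> simp [hΨ₁, hfx, Complex.conj_mul']
  have hc0 : ∑ x, (starRingEnd ℂ) (ψ x) * Ψ₀ x = 1 - (a : ℂ) := by
    have h : ∑ x, (starRingEnd ℂ) (ψ x) * Ψ₁ x
        + ∑ x, (starRingEnd ℂ) (ψ x) * Ψ₀ x = 1 := by
      rw [← Finset.sum_add_distrib, ← hnorm]
      refine Finset.sum_congr rfl fun x _ => by rw [hsumψ x]; ring
    rw [hc1] at h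
    linear_combination h
  have hQ1 : Q.mulVec Ψ₁ = (A * S₀ * Aᴴ).mulVec Ψ₁ := by
    rw [hQ, Matrix.neg_mulVec, ← Matrix.mulVec_mulVec, hSf1, Matrix.mulVec_neg,
      neg_neg]
  have hQ0 : Q.mulVec Ψ₀ = -((A * S₀ * Aᴴ).mulVec Ψ₀) := by
    rw [hQ, Matrix.neg_mulVec, ← Matrix.mulVec_mulVec, hSf0]
  constructor
  · rw [hQ1, key, hc1]
    funext x
    simp only [Pi.sub_apply, Pi.smul_apply, smul_eq_mul]
    rw [hsumψ x]
    push_cast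
    ring
  · rw [hQ0, key, hc0]
    funext x
    simp only [Pi.neg_apply, Pi.sub_apply, Pi.add_apply, Pi.smul_apply, smul_eq_mul]
    rw [hsumψ x]
    push_cast
    ring
end

section
/- Let δ, ε ∈ (0,1) and let L be a positive real number with L ≥ ln(2/ε)/δ. Then tanh((1/L) * ln(1/ε + √(1/ε² − 1))) ≤ δ. -/
open Real

lemma sinh_le_mul_cosh {x : ℝ} (hx : 0 ≤ x) : Real.sinh x ≤ x * Real.cosh x := by
  have hmono : MonotoneOn (fun x : ℝ => x * Real.cosh x - Real.sinh x) (Set.Ici 0) := by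
    apply monotoneOn_of_deriv_nonneg (convex_Ici 0)
    · fun_prop
    · intro y hy
      exact ((differentiable_id.mul Real.differentiable_cosh).sub
        Real.differentiable_sinh).differentiableAt.differentiableWithinAt
    · intro y hy
      simp only [interior_Ici, Set.mem_Ioi] at hy
      have : deriv (fun x : ℝ => x * Real.cosh x - Real.sinh x) y = y * Real.sinh y := by
        rw [deriv_fun_sub (differentiableAt_fun_id.fun_mul (Real.differentiable_cosh y))
            (Real.differentiable_sinh y),
          deriv_fun_mul differentiableAt_fun_id (Real.differentiable_cosh y)]
        simp [Real.deriv_cosh, Real.deriv_sinh, mul_comm]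
      rw [this]
      exact mul_nonneg hy.le (Real.sinh_nonneg_iff.2 hy.le)
  have h := hmono (Set.self_mem_Ici) (Set.mem_Ici.2 hx) hx
  simpa using h

lemma tanh_le_self {x : ℝ} (hx : 0 ≤ x) : Real.tanh x ≤ x := by
  rw [Real.tanh_eq_sinh_div_cosh, div_le_iff₀ (Real.cosh_pos x)]
  exact sinh_le_mul_cosh hx

/-- Width bound underlying Theorem 2 (fixed-point quantum amplitude
amplification): `√(1-γ²) = tanh((1/L)·arccosh(1/ε))` is at most `δ` whenever
`L ≥ ln(2/ε)/δ`. -/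
theorem fixed_point_width_bound
    (δ ε : ℝ) (hδ : δ ∈ Set.Ioo (0 : ℝ) 1) (hε : ε ∈ Set.Ioo (0 : ℝ) 1)
    (L : ℝ) (hL0 : 0 < L) (hL : Real.log (2 / ε) / δ ≤ L) :
    Real.tanh ((1 / L) * Real.log (1 / ε + Real.sqrt (1 / ε ^ 2 - 1))) ≤ δ := by
  obtain ⟨hδ0, hδ1⟩ := hδ
  obtain ⟨hε0, hε1⟩ := hε
  have hεinv : 1 ≤ 1 / ε := one_le_one_div hε0 hε1.le
  have hsq : Real.sqrt (1 / ε ^ 2 - 1) ≤ 1 / ε := by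
    have : 1 / ε ^ 2 - 1 ≤ (1 / ε) ^ 2 := by
      rw [div_pow, one_pow]; linarith
    calc Real.sqrt (1 / ε ^ 2 - 1) ≤ Real.sqrt ((1 / ε) ^ 2) := Real.sqrt_le_sqrt this
      _ = 1 / ε := Real.sqrt_sq (by positivity)
  have harg1 : (1 : ℝ) ≤ 1 / ε + Real.sqrt (1 / ε ^ 2 - 1) :=
    le_add_of_le_of_nonneg hεinv (Real.sqrt_nonneg _)
  have hlognn : 0 ≤ Real.log (1 / ε + Real.sqrt (1 / ε ^ 2 - 1)) :=
    Real.log_nonneg harg1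
  have hxnn : 0 ≤ (1 / L) * Real.log (1 / ε + Real.sqrt (1 / ε ^ 2 - 1)) := by positivity
  refine (tanh_le_self hxnn).trans ?_
  have hlog_le : Real.log (1 / ε + Real.sqrt (1 / ε ^ 2 - 1)) ≤ Real.log (2 / ε) := by
    apply Real.log_le_log (by linarith)
    have : (2 : ℝ) / ε = 1 / ε + 1 / ε := by ring
    rw [this]; linarith
  have hlogδL : Real.log (2 / ε) ≤ δ * L := by
    rw [div_le_iff₀ hδ0] at hL; linarith [hL]
  rw [one_div, inv_mul_le_iff₀ hL0, mul_comm]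
  exact hlog_le.trans hlogδL
end
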